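/- arXiv:2204.07784 — 10 statements merged into one kernel-verified Lean document; each statement's English description precedes it below -/
import Mathlib

section
/- Let f(x) ∈ ℤ[x] be monic and irreducible over ℚ with |f(0)| ≥ 2 and f(0) squarefree, and let p be a prime. Then for every integer n ≥ 0, the polynomial f(x^{p^n}) is irreducible over ℚ. -/
/-!
Capelli's criterion (`Polynomial.irreducible_comp` with the Kummer-type
`X_pow_sub_C_irreducible_of_prime`) reduces irreducibility of `f(x^p)` to showing that a root
`α` of `f` is not a `p`-th power in `ℚ(α)`. If `α = β^p`, then `β` is an algebraic integer, so
`N(β) = r ∈ ℤ` and `±f(0) = N(α) = r^p`; as `f(0)` is squarefree, `r` and hence `f(0)` would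
be units. Since `f(x^p)` inherits all the hypotheses on `f`, induction on `n` finishes.
-/

open Polynomial IntermediateField

theorem Squarefree.isUnit_of_associated_pow {M : Type*} [CommMonoid M] {c r : M} {p : ℕ}
    (hc : Squarefree c) (hp : 2 ≤ p) (h : Associated c (r ^ p)) : IsUnit c := by
  have hrr : r * r ∣ c := by
    rw [← sq]
    exact (pow_dvd_pow r hp).trans h.symm.dvd
  exact h.isUnit_iff.mpr ((hc r hrr).pow p)

section NormOfIntegral

variable {R K L : Type*} [CommRing R] [IsIntegrallyClosed R] [Field K] [Algebra R K]
  [IsFractionRing R K] [Field L] [Algebra K L] [Algebra R L] [IsScalarTower R K L]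

theorem Algebra.exists_norm_eq_algebraMap_of_isIntegral {b : L} (hb : IsIntegral R b) :
    ∃ r : R, Algebra.norm K b = algebraMap R K r :=
  (IsIntegrallyClosed.isIntegral_iff.mp (Algebra.isIntegral_norm K hb)).imp fun _ h => h.symm

theorem pow_ne_of_norm_eq_squarefree {x : L} (hx : IsIntegral R x) {c : R} (hc : Squarefree c)
    (hcu : ¬IsUnit c) (hN : Algebra.norm K x = algebraMap R K c) {p : ℕ} (hp : 2 ≤ p) (b : L) :
    b ^ p ≠ x := by
  rintro rfl
  obtain ⟨r, hr⟩ := Algebra.exists_norm_eq_algebraMap_of_isIntegral (K := K) (hx.of_pow (by omega))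
  have hcr : c = r ^ p := by
    apply IsFractionRing.injective R K
    rw [← hN, map_pow, map_pow, hr]
  exact hcu (hc.isUnit_of_associated_pow hp (.of_eq hcr))

end NormOfIntegral

theorem isIntegral_int_of_minpoly_eq_map {K : Type*} [Field K] [Algebra ℚ K] {f : ℤ[X]}
    (hf : f.Monic) {x : K} (hx : minpoly ℚ x = f.map (Int.castRingHom ℚ)) : IsIntegral ℤ x :=
  ⟨f, hf, by rw [← aeval_def, ← aeval_map_algebraMap ℚ]; exact hx ▸ minpoly.aeval ℚ x⟩

theorem Polynomial.coeff_zero_expand {R : Type*} [CommSemiring R] {p : ℕ} (hp : 0 < p)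
    (f : R[X]) : (expand R p f).coeff 0 = f.coeff 0 := by
  simp [coeff_expand hp]

theorem Polynomial.irreducible_map_expand_of_squarefree_coeff_zero {f : ℤ[X]} (hmonic : f.Monic)
    (hirr : Irreducible (f.map (Int.castRingHom ℚ)))
    (hcu : ¬IsUnit (f.coeff 0)) (hsf : Squarefree (f.coeff 0)) {p : ℕ} (hp : p.Prime) :
    Irreducible ((expand ℤ p f).map (Int.castRingHom ℚ)) := by
  rw [map_expand, expand_eq_comp_X_pow]
  refine irreducible_comp (hmonic.map _) (monic_X_pow p) hirr fun E _ _ x hx => ?_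
  rw [Polynomial.map_pow, map_X]
  refine X_pow_sub_C_irreducible_of_prime hp fun b => ?_
  -- Otherwise `DivisionRing.toRatAlgebra` is found, which is not defeq to the algebra
  -- structure `minpoly_gen` and `adjoin.powerBasis` are stated for.
  let _ : Algebra ℚ ℚ⟮x⟯ := ℚ⟮x⟯.algebra'
  have hxQ : IsIntegral ℚ x := by
    rw [← minpoly.ne_zero_iff, hx]
    exact hirr.ne_zero
  have hgen : minpoly ℚ (AdjoinSimple.gen ℚ x) = f.map (Int.castRingHom ℚ) :=
    (minpoly_gen ℚ x).trans hx
  have hassoc : Associated ((-1) ^ (adjoin.powerBasis hxQ).dim * f.coeff 0) (f.coeff 0) :=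
    associated_unit_mul_left _ _ (isUnit_neg_one.pow _)
  refine pow_ne_of_norm_eq_squarefree (K := ℚ) (isIntegral_int_of_minpoly_eq_map hmonic hgen)
    (hassoc.squarefree_iff.mpr hsf) (mt hassoc.isUnit_iff.mp hcu) ?_ hp.two_le b
  rw [← adjoin.powerBasis_gen hxQ, Algebra.PowerBasis.norm_gen_eq_coeff_zero_minpoly,
    adjoin.powerBasis_gen hxQ, hgen, coeff_map]
  simp

theorem stmt_0 (f : Polynomial ℤ) (hmonic : f.Monic)
    (hirr : Irreducible (f.map (Int.castRingHom ℚ)))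
    (habs : 2 ≤ |f.coeff 0|) (hsf : Squarefree (f.coeff 0))
    (p : ℕ) (hp : p.Prime) (n : ℕ) :
    Irreducible ((f.comp (X ^ p ^ n)).map (Int.castRingHom ℚ)) := by
  have hcu : ¬IsUnit (f.coeff 0) := by
    rw [Int.isUnit_iff_abs_eq]
    omega
  rw [← expand_eq_comp_X_pow]
  induction n with
  | zero => simpa using hirr
  | succ n ih =>
    have hpn : 0 < p ^ n := pow_pos hp.pos n
    rw [pow_succ', expand_mul]
    refine irreducible_map_expand_of_squarefree_coeff_zero (hmonic.expand hpn) ih ?_ ?_ hp <;>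
      rwa [coeff_zero_expand hpn]
end

section
/- Let f(x) = x^n + A x^m + B ∈ ℚ[x] with 0 < m < n and d = gcd(n, m). Then the discriminant of f equals (-1)^{n(n-1)/2} B^{m-1} (n^{n/d} B^{(n-m)/d} - (-1)^{n/d} (n-m)^{(n-m)/d} m^{m/d} A^{n/d})^d. -/
open Polynomial Finset

/-!
The discriminant is `(-1)^(n(n-1)/2) ∏ᵢ f'(αᵢ)`, and `f'(x) = x^(m-1) (n x^(n-m) + m A)`; the
`αᵢ^(m-1)` multiply to `((-1)^n B)^(m-1)`. Writing `n X^(n-m) + m A = n ∏ⱼ (X - ζ^j r)` with `ζ` a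
primitive `(n-m)`-th root of unity and `r^(n-m) = t := -mA/n`, swapping the double product turns
`∏ᵢ (n αᵢ^(n-m) + m A)` into `± n^n ∏ⱼ f(ζ^j r)`. At these points `x^n = t x^m`, so
`f(ζ^j r) = B + (A + t) r^m (ζ^m)^j`. Since `ω = ζ^m` is a primitive `e`-th root of unity,
`e = (n-m)/d`, its powers run `d` times through all `e`-th roots of unity, and
`∏_{k<e} (x - ωᵏ y) = x^e - y^e` evaluates the product.
-/

theorem Function.Periodic.prod_range_mul {M : Type*} [CommMonoid M] {g : ℕ → M} {e : ℕ}
    (hg : Function.Periodic g e) (d : ℕ) :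
    ∏ j ∈ range (d * e), g j = (∏ j ∈ range e, g j) ^ d := by
  induction d with
  | zero => simp
  | succ d ih =>
    rw [Nat.succ_mul, prod_range_add, ih, pow_succ]
    congr 1
    exact prod_congr rfl fun j _ => by rw [add_comm]; exact hg.nat_mul d j

theorem IsPrimitiveRoot.prod_range_sub_pow_mul {R : Type*} [CommRing R] [IsDomain R] {ζ : R}
    {N m : ℕ} (hζ : IsPrimitiveRoot ζ N) (hN : 0 < N) (hm : m ≠ 0) (x y : R) :
    ∏ j ∈ range N, (x - (ζ ^ m) ^ j * y)
      = (x ^ (N / N.gcd m) - y ^ (N / N.gcd m)) ^ N.gcd m := by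
  set e := N / N.gcd m
  have hω : IsPrimitiveRoot (ζ ^ m) e := by
    rw [IsPrimitiveRoot.iff_orderOf, orderOf_pow' ζ hm, ← hζ.eq_orderOf]
  have he : 0 < e := Nat.div_pos (Nat.gcd_le_left m hN) (Nat.gcd_pos_of_pos_left m hN)
  have hperiodic : Function.Periodic (fun j => x - (ζ ^ m) ^ j * y) e := fun j => by
    simp only [pow_add, hω.pow_eq_one, mul_one]
  have hfactor := congrArg (eval x) (X_pow_sub_C_eq_prod hω he (rfl : y ^ e = y ^ e))
  simp only [eval_sub, eval_pow, eval_X, eval_C, eval_prod] at hfactor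
  have hNde : N = N.gcd m * e := (Nat.mul_div_cancel' (Nat.gcd_dvd_left N m)).symm
  conv_lhs => rw [hNde, hperiodic.prod_range_mul, ← hfactor]

theorem prod_prod_Ioi_sub_sq {R : Type*} [CommRing R] {n : ℕ} (α : Fin n → R) :
    ∏ i, ∏ j ∈ Ioi i, (α i - α j) ^ 2
      = (-1) ^ (n * (n - 1) / 2) * ∏ i, ∏ j ∈ univ.erase i, (α i - α j) := by
  have hcard : ∑ i : Fin n, #(Ioi i) = n * (n - 1) / 2 := by
    simp only [Fin.card_Ioi]
    rw [Fin.sum_univ_eq_sum_range (fun i => n - 1 - i), sum_range_reflect (fun i => i) n,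
      sum_range_id]
  have hoff : ∏ i, ∏ j ∈ univ.erase i, (α i - α j)
      = (-1) ^ (n * (n - 1) / 2) * ∏ i, ∏ j ∈ Ioi i, (α i - α j) ^ 2 := by
    simp only [← compl_singleton]
    rw [← prod_prod_Ioi_mul_eq_prod_prod_off_diag (fun j i => α i - α j), ← hcard,
      ← prod_pow_eq_pow_sum, ← prod_mul_distrib]
    refine prod_congr rfl fun i _ => ?_
    rw [← prod_neg]
    exact prod_congr rfl fun j _ => by ring
  rw [hoff, ← mul_assoc, ← pow_add, Even.neg_one_pow ⟨_, rfl⟩, one_mul]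

theorem eval_derivative_prod_X_sub_C {R ι : Type*} [CommRing R] [DecidableEq ι] {s : Finset ι}
    (α : ι → R) {i : ι} (hi : i ∈ s) :
    (∏ j ∈ s, (X - C (α j))).derivative.eval (α i) = ∏ j ∈ s.erase i, (α i - α j) := by
  rw [derivative_prod_finset, eval_finsetSum, sum_eq_single i]
  · simp [eval_prod]
  · intro j _ hji
    rw [eval_mul, eval_prod, prod_eq_zero (mem_erase.2 ⟨Ne.symm hji, hi⟩) (by simp), zero_mul]
  · exact fun h => absurd hi h

theorem prod_eval_prod_X_sub_C_comm {R ι κ : Type*} [CommRing R] (s : Finset ι) (t : Finset κ)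
    (α : ι → R) (β : κ → R) :
    ∏ i ∈ s, (∏ j ∈ t, (X - C (β j))).eval (α i)
      = (-1) ^ (#s * #t) * ∏ j ∈ t, (∏ i ∈ s, (X - C (α i))).eval (β j) := by
  simp only [eval_prod, eval_sub, eval_X, eval_C]
  rw [prod_comm, pow_mul, ← prod_const ((-1 : R) ^ #s), ← prod_mul_distrib]
  refine prod_congr rfl fun j _ => ?_
  rw [← prod_neg]
  exact prod_congr rfl fun i _ => by ring

theorem prod_eq_neg_one_pow_mul_eval_zero {R ι : Type*} [CommRing R] (s : Finset ι) (α : ι → R) :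
    ∏ i ∈ s, α i = (-1) ^ #s * (∏ i ∈ s, (X - C (α i))).eval 0 := by
  simp only [eval_prod, eval_sub, eval_X, eval_C, zero_sub, prod_neg, ← mul_assoc, ← pow_add,
    Even.neg_one_pow ⟨_, rfl⟩, one_mul]

theorem eval_derivative_trinomial {R : Type*} [CommRing R] {n m : ℕ} (hm : 0 < m) (hmn : m ≤ n)
    (a b z : R) :
    (X ^ n + C a * X ^ m + C b).derivative.eval z = z ^ (m - 1) * (n * z ^ (n - m) + m * a) := by
  have hpow : z ^ (n - 1) = z ^ (m - 1) * z ^ (n - m) := by rw [← pow_add]; congr 1; omega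
  simp only [derivative_add, derivative_C_mul, derivative_X_pow, derivative_C, eval_add, eval_mul,
    eval_pow, eval_X, eval_C, add_zero, hpow]
  ring

theorem eval_trinomial_of_pow_sub_eq {R : Type*} [CommRing R] {n m : ℕ} (hmn : m ≤ n)
    {a b t β : R} (hβ : β ^ (n - m) = t) :
    (X ^ n + C a * X ^ m + C b).eval β = b + (a + t) * β ^ m := by
  have hpow : β ^ n = β ^ m * t := by rw [← hβ, ← pow_add]; congr 1; omega
  simp only [eval_add, eval_mul, eval_pow, eval_X, eval_C, hpow]
  ring

theorem pow_add_mul_sub_neg_pow {K : Type*} [Field K] {x y a b s : K} (hx : x ≠ 0) {e v : ℕ}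
    (hs : s ^ e = (-(y * a) / x) ^ v) :
    x ^ (e + v) * (b ^ e - (-((a + -(y * a) / x) * s)) ^ e)
      = x ^ (e + v) * b ^ e - (-1) ^ (e + v) * (x - y) ^ e * y ^ v * a ^ (e + v) := by
  have hat : a + -(y * a) / x = a * (x - y) / x := by field_simp; ring
  rw [neg_pow, mul_pow, hs, hat, div_pow, mul_pow a, div_pow, pow_add, pow_add]
  field_simp
  ring

section Trinomial

variable {K : Type*} [Field K] [IsAlgClosed K] [CharZero K] {n m : ℕ} {a b : K} {α : Fin n → K}

theorem prod_mul_pow_add_of_trinomial_eq_prod (hm : 0 < m) (hmn : m < n)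
    (hα : X ^ n + C a * X ^ m + C b = ∏ i, (X - C (α i))) :
    ∏ i, ((n : K) * α i ^ (n - m) + m * a)
      = (-1) ^ (n * (n - m)) * ((n : K) ^ (n / n.gcd m) * b ^ ((n - m) / n.gcd m)
          - (-1) ^ (n / n.gcd m) * ((n : K) - m) ^ ((n - m) / n.gcd m) * (m : K) ^ (m / n.gcd m)
            * a ^ (n / n.gcd m)) ^ n.gcd m := by
  set N := n - m
  set d := n.gcd m
  have hNpos : 0 < N := Nat.sub_pos_of_lt hmn
  have hn : (n : K) ≠ 0 := Nat.cast_ne_zero.2 (by omega)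
  set t : K := -(m * a) / n
  obtain ⟨r, hr⟩ := IsAlgClosed.exists_pow_nat_eq t hNpos
  have : NeZero N := ⟨hNpos.ne'⟩
  obtain ⟨ζ, hζ⟩ := HasEnoughRootsOfUnity.exists_primitiveRoot K N
  have heval (j : ℕ) :
      (X ^ n + C a * X ^ m + C b).eval (ζ ^ j * r) = b - (ζ ^ m) ^ j * (-((a + t) * r ^ m)) := by
    have hβ : (ζ ^ j * r) ^ N = t := by
      rw [mul_pow, ← pow_mul, mul_comm j N, pow_mul, hζ.pow_eq_one, one_pow, one_mul, hr]
    rw [eval_trinomial_of_pow_sub_eq hmn.le hβ]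
    ring
  have hgcd : N.gcd m = d := Nat.gcd_sub_self_left hmn.le
  calc ∏ i, ((n : K) * α i ^ N + m * a)
      = ∏ i, (n : K) * (X ^ N - C t).eval (α i) := by
        refine prod_congr rfl fun i _ => ?_
        simp only [eval_sub, eval_pow, eval_X, eval_C, t]
        field_simp
        ring
    _ = (n : K) ^ n
          * ((-1) ^ (n * N) * ∏ j ∈ range N, (X ^ n + C a * X ^ m + C b).eval (ζ ^ j * r)) := by
        rw [prod_mul_distrib, prod_const, X_pow_sub_C_eq_prod hζ hNpos hr,
          prod_eval_prod_X_sub_C_comm, ← hα]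
        simp
    _ = (n : K) ^ n * ((-1) ^ (n * N) * (b ^ (N / d) - (-((a + t) * r ^ m)) ^ (N / d)) ^ d) := by
        simp only [heval]
        rw [hζ.prod_range_sub_pow_mul hNpos hm.ne', hgcd]
    _ = (-1) ^ (n * N)
          * ((n : K) ^ (n / d) * (b ^ (N / d) - (-((a + t) * r ^ m)) ^ (N / d))) ^ d := by
        rw [mul_pow ((n : K) ^ (n / d)), ← pow_mul, Nat.div_mul_cancel (Nat.gcd_dvd_left n m)]
        ring
    _ = _ := by
        have hdN : d ∣ N := hgcd ▸ Nat.gcd_dvd_left N m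
        have hu : n / d = N / d + m / d := by
          rw [← Nat.add_div_of_dvd_right hdN]; congr 1; omega
        have hrm : (r ^ m) ^ (N / d) = t ^ (m / d) := by
          rw [← hr, ← pow_mul, ← pow_mul, ← Nat.mul_div_assoc _ hdN,
            ← Nat.mul_div_assoc _ (Nat.gcd_dvd_right n m), mul_comm]
        rw [hu, pow_add_mul_sub_neg_pow hn hrm]

theorem prod_eval_derivative_of_trinomial_eq_prod (hm : 0 < m) (hmn : m < n)
    (hα : X ^ n + C a * X ^ m + C b = ∏ i, (X - C (α i))) :
    ∏ i, (X ^ n + C a * X ^ m + C b).derivative.eval (α i)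
      = b ^ (m - 1) * ((n : K) ^ (n / n.gcd m) * b ^ ((n - m) / n.gcd m)
          - (-1) ^ (n / n.gcd m) * ((n : K) - m) ^ ((n - m) / n.gcd m) * (m : K) ^ (m / n.gcd m)
            * a ^ (n / n.gcd m)) ^ n.gcd m := by
  have hprod : ∏ i, α i = (-1) ^ n * b := by
    rw [prod_eq_neg_one_pow_mul_eval_zero, ← hα, card_univ, Fintype.card_fin]
    simp [zero_pow (show n ≠ 0 by omega), zero_pow hm.ne']
  have hsign : ((-1 : K) ^ n) ^ (m - 1) * (-1) ^ (n * (n - m)) = 1 := by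
    rw [← pow_mul, ← pow_add, ← mul_add, show m - 1 + (n - m) = n - 1 by omega]
    exact Even.neg_one_pow (Nat.even_mul_pred_self n)
  simp only [eval_derivative_trinomial hm hmn.le, prod_mul_distrib, prod_pow, hprod,
    prod_mul_pow_add_of_trinomial_eq_prod hm hmn hα, mul_pow]
  rw [mul_mul_mul_comm, hsign, one_mul]

end Trinomial

theorem stmt_1 (n m : ℕ) (A B : ℚ) (hm : 0 < m) (hmn : m < n)
    (d : ℕ) (hd : d = Nat.gcd n m)
    (α : Fin n → ℂ)
    (hroots : (X ^ n + C A * X ^ m + C B : Polynomial ℚ).map (algebraMap ℚ ℂ)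
      = ∏ i, (X - C (α i))) :
    ∏ i, ∏ j ∈ Finset.Ioi i, (α i - α j) ^ 2
      = (-1) ^ (n * (n - 1) / 2) * (B : ℂ) ^ (m - 1) *
        ((n : ℂ) ^ (n / d) * (B : ℂ) ^ ((n - m) / d)
          - (-1) ^ (n / d) * ((n : ℂ) - (m : ℂ)) ^ ((n - m) / d)
            * (m : ℂ) ^ (m / d) * (A : ℂ) ^ (n / d)) ^ d := by
  have hα : X ^ n + C (A : ℂ) * X ^ m + C (B : ℂ) = ∏ i, (X - C (α i)) := by
    simpa using hroots
  subst hd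
  rw [prod_prod_Ioi_sub_sq, mul_assoc, ← prod_eval_derivative_of_trinomial_eq_prod hm hmn hα, hα]
  simp only [eval_derivative_prod_X_sub_C α (mem_univ _)]
end

section
/- For every prime p ≥ 3 and every integer n ≥ 0, the central binomial coefficient C(2p^{n+1}, p^{n+1}) satisfies C(2p^{n+1}, p^{n+1}) ≡ 2 (mod p^2). -/
/-! By Vandermonde, `C(2m, m) = ∑ C(m, i)²`. For `m = p ^ k` the prime `p` divides every inner
`C(m, i)`, so modulo `p²` only the two outer terms, both `1`, survive. -/

open Finset

theorem Nat.choose_two_mul_self_modEq_two {m d : ℕ} (hm : m ≠ 0)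
    (hd : ∀ i, 0 < i → i < m → d ∣ m.choose i ^ 2) :
    (2 * m).choose m ≡ 2 [MOD d] := by
  obtain ⟨l, rfl⟩ := Nat.exists_eq_succ_of_ne_zero hm
  have hinner : d ∣ ∑ i ∈ range l, (l + 1).choose (i + 1) ^ 2 :=
    dvd_sum fun i hi => hd (i + 1) i.succ_pos (by simpa using mem_range.mp hi)
  rw [← Nat.sum_range_choose_sq, sum_range_succ, sum_range_succ']
  simpa [add_assoc, one_add_one_eq_two] using
    ((Nat.modEq_zero_iff_dvd.mpr hinner).add_right 2 : _ ≡ 0 + 2 [MOD d])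

theorem Nat.Prime.choose_two_mul_pow_modEq_two {p : ℕ} (hp : p.Prime) (k : ℕ) :
    (2 * p ^ k).choose (p ^ k) ≡ 2 [MOD p ^ 2] :=
  Nat.choose_two_mul_self_modEq_two (pow_ne_zero _ hp.ne_zero) fun _ hi0 him =>
    pow_dvd_pow_of_dvd (hp.dvd_choose_pow hi0.ne' him.ne) 2

theorem stmt_3_general (p : ℕ) (hp : p.Prime) (n : ℕ) :
    Nat.choose (2 * p ^ (n + 1)) (p ^ (n + 1)) ≡ 2 [MOD p ^ 2] :=
  hp.choose_two_mul_pow_modEq_two (n + 1)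

theorem stmt_3 (p : ℕ) (hp : p.Prime) (hp3 : 3 ≤ p) (n : ℕ) :
    Nat.choose (2 * p ^ (n + 1)) (p ^ (n + 1)) ≡ 2 [MOD p ^ 2] :=
  stmt_3_general p hp n
end

section
/- Let F(x) = x^3 + A x^2 + B ∈ ℤ[x] with B squarefree, |B| ≥ 2, and suppose (A mod 4, B mod 4) lies in {(0,2),(1,1),(1,3),(2,2),(3,1),(3,3)}. Then F(x) is irreducible over ℚ. -/
/-!
A rational root of the monic cubic is an integer `r`, and `r ^ 2 (r + A) = -B` makes `r ^ 2` divide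
the squarefree `B`, so `r = ±1`. Then `A + B = ∓1` is odd, whereas every admissible residue pair
`(A mod 4, B mod 4)` has `A + B` even. A cubic without rational roots is irreducible over `ℚ`.
-/

open Polynomial

theorem Polynomial.Monic.irreducible_map_rat_of_forall_eval_ne_zero {p : ℤ[X]} (hp : p.Monic)
    (hp2 : 2 ≤ p.natDegree) (hp3 : p.natDegree ≤ 3) (hroot : ∀ r : ℤ, p.eval r ≠ 0) :
    Irreducible (p.map (Int.castRingHom ℚ)) := by
  have hdeg : (p.map (Int.castRingHom ℚ)).natDegree = p.natDegree := hp.natDegree_map _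
  rw [(hp.map _).irreducible_iff_roots_eq_zero_of_degree_le_three (by rwa [hdeg]) (by rwa [hdeg]),
    Multiset.eq_zero_iff_forall_notMem]
  intro x hx
  rw [mem_roots (hp.map _).ne_zero, IsRoot, eval_map] at hx
  replace hx : aeval x p = 0 := hx
  obtain ⟨r, rfl⟩ := isInteger_of_is_root_of_monic hp hx
  rw [aeval_algebraMap_apply_eq_algebraMap_eval, algebraMap_int_eq, eq_intCast,
    Int.cast_eq_zero] at hx
  exact hroot r hx

theorem Int.odd_add_of_cubic_root_of_squarefree {A B r : ℤ} (hB : Squarefree B)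
    (hr : r ^ 3 + A * r ^ 2 + B = 0) : Odd (A + B) := by
  have hunit : IsUnit r := hB r ⟨-(r + A), by linear_combination hr⟩
  rw [Int.odd_iff]
  rcases Int.isUnit_iff.mp hunit with rfl | rfl <;> omega

theorem stmt_5_general (A B : ℤ) (hB : Squarefree B)
    (hAB : (A % 4, B % 4) ∈
      ({(0,2),(1,1),(1,3),(2,2),(3,1),(3,3)} : Set (ℤ × ℤ))) :
    Irreducible ((X ^ 3 + C A * X ^ 2 + C B : Polynomial ℤ).map (Int.castRingHom ℚ)) := by
  have hmonic : (X ^ 3 + C A * X ^ 2 + C B : ℤ[X]).Monic := by monicity!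
  have hdeg : (X ^ 3 + C A * X ^ 2 + C B : ℤ[X]).natDegree = 3 := by compute_degree!
  have heven : Even (A + B) := by
    simp only [Set.mem_insert_iff, Set.mem_singleton_iff, Prod.mk.injEq] at hAB
    rw [Int.even_iff]
    omega
  refine hmonic.irreducible_map_rat_of_forall_eval_ne_zero (by omega) (by omega) fun r hr => ?_
  refine Int.not_odd_iff_even.mpr heven (Int.odd_add_of_cubic_root_of_squarefree (r := r) hB ?_)
  simpa using hr

theorem stmt_5 (A B : ℤ) (hB : Squarefree B) (hB2 : 2 ≤ |B|)
    (hAB : (A % 4, B % 4) ∈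
      ({(0,2),(1,1),(1,3),(2,2),(3,1),(3,3)} : Set (ℤ × ℤ))) :
    Irreducible ((X ^ 3 + C A * X ^ 2 + C B : Polynomial ℤ).map (Int.castRingHom ℚ)) :=
  stmt_5_general A B hB hAB
end

section
/- Let F(x) = x^4 + A x^3 + B ∈ ℤ[x] with B squarefree, |B| ≥ 2, and suppose (A mod 4, B mod 4) lies in {(0,1),(0,2),(1,1),(1,3),(2,2),(2,3),(3,1),(3,3)}. Then F(x) is irreducible over ℚ. -/
/-!
By Gauss's lemma it suffices to rule out a factorization of `F = X⁴ + A X³ + B` over `ℤ` into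
monic factors of degree `1 + 3` or `2 + 2`. An integer root `r` satisfies `r² ∣ B`, so `r = ±1`
and `F(±1) = 1 ± A + B`. In a factorization `(X² + a X + b)(X² + c X + d)` we have `b d = B`,
so squarefreeness makes `b` and `d` coprime; comparing the coefficients of `X` then forces
`a = b t` and `c = -d t`, hence `b + d = t² B` and `A = t (b - d)`. Both situations are
incompatible with the residues of `(A, B)` modulo `4`.
-/

open Polynomial

def admissibleResidues : Finset (ZMod 4 × ZMod 4) :=
  {(0,1),(0,2),(1,1),(1,3),(2,2),(2,3),(3,1),(3,3)}

lemma intCast_mem_admissibleResidues {A B : ℤ}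
    (h : (A % 4, B % 4) ∈
      ({(0,1),(0,2),(1,1),(1,3),(2,2),(2,3),(3,1),(3,3)} : Set (ℤ × ℤ))) :
    ((A : ZMod 4), (B : ZMod 4)) ∈ admissibleResidues := by
  rw [← ZMod.intCast_mod A, ← ZMod.intCast_mod B]
  simp only [Set.mem_insert_iff, Set.mem_singleton_iff, Prod.ext_iff] at h
  rcases h with ⟨hA, hB⟩ | ⟨hA, hB⟩ | ⟨hA, hB⟩ | ⟨hA, hB⟩ | ⟨hA, hB⟩ | ⟨hA, hB⟩ | ⟨hA, hB⟩ |
    ⟨hA, hB⟩ <;> simp only [Nat.cast_ofNat, hA, hB] <;> decide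

lemma eval_unit_ne_zero_of_mem_admissibleResidues :
    ∀ a b r : ZMod 4, (a, b) ∈ admissibleResidues → r ^ 2 = 1 → r ^ 4 + a * r ^ 3 + b ≠ 0 := by
  decide

lemma add_ne_sq_mul_of_mem_admissibleResidues :
    ∀ b d t : ZMod 4, (t * (b - d), b * d) ∈ admissibleResidues → b + d ≠ t ^ 2 * (b * d) := by
  decide

lemma exists_eq_mul_of_squarefree_mul {R : Type*} [CommRing R] [IsDomain R]
    [DecompositionMonoid R] {a b c d : R} (hbd : Squarefree (b * d)) (h : a * d + b * c = 0) :
    ∃ t, a = b * t ∧ c = -(d * t) := by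
  have hrel := IsRelPrime.of_squarefree_mul hbd
  obtain ⟨t, rfl⟩ : b ∣ a := hrel.dvd_of_dvd_mul_right ⟨-c, by linear_combination h⟩
  have hc : b * (c + d * t) = 0 := by linear_combination h
  exact ⟨t, rfl, by
    linear_combination (mul_eq_zero.mp hc).resolve_left (left_ne_zero_of_mul hbd.ne_zero)⟩

lemma Polynomial.Monic.eq_X_sq_add_C_mul_X_add_C {R : Type*} [Semiring R] {p : R[X]}
    (hp : p.Monic) (h : p.natDegree = 2) : p = X ^ 2 + C (p.coeff 1) * X + C (p.coeff 0) := by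
  conv_lhs => rw [hp.as_sum, h]
  simp [Finset.sum_range_succ, add_comm, add_left_comm]

lemma coeffs_of_quadratic_mul_quadratic {R : Type*} [CommRing R] {a b c d A B : R}
    (h : (X ^ 2 + C a * X + C b) * (X ^ 2 + C c * X + C d) = X ^ 4 + C A * X ^ 3 + C B) :
    b * d = B ∧ a * d + b * c = 0 ∧ b + d + a * c = 0 ∧ a + c = A := by
  have hexp : (X ^ 2 + C a * X + C b) * (X ^ 2 + C c * X + C d) =
      X ^ 4 + C (a + c) * X ^ 3 + C (b + d + a * c) * X ^ 2 + C (a * d + b * c) * X +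
        C (b * d) := by
    simp only [C_add, C_mul]; ring
  rw [hexp] at h
  have hcoeff (n : ℕ) := congrArg (coeff · n) h
  simp only [coeff_add, coeff_C_mul, coeff_X_pow, coeff_X, coeff_C] at hcoeff
  exact ⟨by simpa using hcoeff 0, by simpa using hcoeff 1, by simpa using hcoeff 2,
    by simpa using hcoeff 3⟩

section

variable {A B : ℤ}

lemma not_isRoot_quartic (hB : Squarefree B)
    (hAB : ((A : ZMod 4), (B : ZMod 4)) ∈ admissibleResidues) (r : ℤ) :
    ¬ (X ^ 4 + C A * X ^ 3 + C B : ℤ[X]).IsRoot r := by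
  intro hr
  simp only [IsRoot, eval_add, eval_mul, eval_pow, eval_X, eval_C] at hr
  have hunit : IsUnit r := hB r ⟨-(r ^ 2 + A * r), by linear_combination hr⟩
  have hcast := congrArg (Int.cast : ℤ → ZMod 4) hr
  push_cast at hcast
  exact eval_unit_ne_zero_of_mem_admissibleResidues _ _ (r : ZMod 4) hAB
    (by simpa using congrArg (Int.cast : ℤ → ZMod 4) (Int.isUnit_sq hunit)) hcast

lemma quadratic_mul_quadratic_ne_quartic (hB : Squarefree B)
    (hAB : ((A : ZMod 4), (B : ZMod 4)) ∈ admissibleResidues) (a b c d : ℤ) :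
    (X ^ 2 + C a * X + C b) * (X ^ 2 + C c * X + C d) ≠ X ^ 4 + C A * X ^ 3 + C B := by
  intro h
  obtain ⟨rfl, hX, hX2, rfl⟩ := coeffs_of_quadratic_mul_quadratic h
  obtain ⟨t, rfl, rfl⟩ := exists_eq_mul_of_squarefree_mul hB hX
  have hsum : b + d = t ^ 2 * (b * d) := by linear_combination hX2
  have hcast := congrArg (Int.cast : ℤ → ZMod 4) hsum
  push_cast at hcast hAB
  exact add_ne_sq_mul_of_mem_admissibleResidues _ _ t (by convert hAB using 2; ring) hcast

end

theorem stmt_6_general (A B : ℤ) (hB : Squarefree B)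
    (hAB : (A % 4, B % 4) ∈
      ({(0,1),(0,2),(1,1),(1,3),(2,2),(2,3),(3,1),(3,3)} : Set (ℤ × ℤ))) :
    Irreducible ((X ^ 4 + C A * X ^ 3 + C B : Polynomial ℤ).map (Int.castRingHom ℚ)) := by
  have hmod := intCast_mem_admissibleResidues hAB
  have hmon : (X ^ 4 + C A * X ^ 3 + C B : ℤ[X]).Monic := by monicity!
  have hdeg : (X ^ 4 + C A * X ^ 3 + C B : ℤ[X]).natDegree = 4 := by compute_degree!
  rw [show Int.castRingHom ℚ = algebraMap ℤ ℚ from rfl,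
    ← hmon.irreducible_iff_irreducible_map_fraction_map, hmon.irreducible_iff_natDegree', hdeg]
  refine ⟨fun h => by rw [h, natDegree_one] at hdeg; omega, ?_⟩
  rintro f g hf hg hfg hgdeg
  obtain hg1 | hg2 : g.natDegree = 1 ∨ g.natDegree = 2 := by
    simp only [Finset.mem_Ioc] at hgdeg; omega
  · refine not_isRoot_quartic hB hmod (-g.coeff 0) ?_
    rw [← hfg, hg.eq_X_add_C hg1]
    simp
  · have hf2 : f.natDegree = 2 := by
      have := hf.natDegree_mul hg; rw [hfg, hdeg] at this; omega
    rw [hf.eq_X_sq_add_C_mul_X_add_C hf2, hg.eq_X_sq_add_C_mul_X_add_C hg2] at hfg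
    exact quadratic_mul_quadratic_ne_quartic hB hmod _ _ _ _ hfg

theorem stmt_6 (A B : ℤ) (hB : Squarefree B) (hB2 : 2 ≤ |B|)
    (hAB : (A % 4, B % 4) ∈
      ({(0,1),(0,2),(1,1),(1,3),(2,2),(2,3),(3,1),(3,3)} : Set (ℤ × ℤ))) :
    Irreducible ((X ^ 4 + C A * X ^ 3 + C B : Polynomial ℤ).map (Int.castRingHom ℚ)) :=
  stmt_6_general A B hB hAB
end

section
/- Let F(x) = x^2 + A x + B ∈ ℤ[x] with B squarefree, |B| ≥ 2, and (A mod 4, B mod 4) ∈ {(0,1),(0,2),(1,1),(1,3),(2,2),(2,3),(3,1),(3,3)}. Then for every prime p and every integer n ≥ 0, F(x^{p^n}) is irreducible over ℚ. -/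
/-!
`F` has no root modulo 4, hence no rational root, so it is irreducible over `ℚ`. By Capelli's
lemma `F(X ^ p ^ n)` is then irreducible as soon as `X ^ p ^ n - α` is irreducible over `ℚ(α)`
for a root `α` of `F`, whose norm is `B`. Peeling off one factor `p` at a time, it suffices that
in each field `L` of the resulting tower the current generator `γ` is not a `p`-th power. The
norm of a root of `X ^ p - γ` is `± N(γ)`, so `|N(γ)| = |B|` all the way up the tower, and a
`p`-th root `b` of `γ` would give a rational number `N(b)` with `|N(b)| ^ p = |B|`, which is
impossible for `B` squarefree and not a unit.
-/

open Polynomial IntermediateField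

theorem pow_ne_algebraMap_of_squarefree {R K : Type*} [CommRing R] [IsDomain R]
    [IsIntegrallyClosed R] [Field K] [Algebra R K] [IsFractionRing R K] {b : R}
    (hb : Squarefree b) (hb1 : ¬IsUnit b) {n : ℕ} (hn : 2 ≤ n) (q : K) :
    q ^ n ≠ algebraMap R K b := by
  intro hq
  have hint : IsIntegral R q :=
    ⟨X ^ n - C b, monic_X_pow_sub_C b (by omega), by simp [hq]⟩
  obtain ⟨m, rfl⟩ := IsIntegrallyClosed.isIntegral_iff.mp hint
  rw [← map_pow, (IsFractionRing.injective R K).eq_iff] at hq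
  subst hq
  have := hb.eq_zero_or_one_of_pow_of_not_isUnit fun hm ↦ hb1 (hm.pow n)
  omega

theorem Int.quadratic_ne_zero_of_mod_four {A B : ℤ}
    (hAB : (A % 4, B % 4) ∈
      ({(0,1),(0,2),(1,1),(1,3),(2,2),(2,3),(3,1),(3,3)} : Set (ℤ × ℤ))) (r : ℤ) :
    r ^ 2 + A * r + B ≠ 0 := by
  intro h
  have h4 : (r : ZMod 4) ^ 2 + ((A % 4 : ℤ) : ZMod 4) * r + ((B % 4 : ℤ) : ZMod 4) = 0 := by
    rw [show ((A % 4 : ℤ) : ZMod 4) = A from ZMod.intCast_mod A 4,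
      show ((B % 4 : ℤ) : ZMod 4) = B from ZMod.intCast_mod B 4]
    exact_mod_cast congrArg (Int.cast : ℤ → ZMod 4) h
  generalize (r : ZMod 4) = x at h4
  simp only [Set.mem_insert_iff, Set.mem_singleton_iff, Prod.mk.injEq] at hAB
  rcases hAB with ⟨hA, hB⟩ | ⟨hA, hB⟩ | ⟨hA, hB⟩ | ⟨hA, hB⟩ | ⟨hA, hB⟩ | ⟨hA, hB⟩ |
    ⟨hA, hB⟩ | ⟨hA, hB⟩ <;> rw [hA, hB] at h4 <;> revert x h4 <;> decide

theorem Polynomial.Monic.irreducible_map_rat_of_forall_eval_ne_zero_s7 {f : ℤ[X]} (hf : f.Monic)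
    (h2 : 2 ≤ f.natDegree) (h3 : f.natDegree ≤ 3) (hroot : ∀ r : ℤ, f.eval r ≠ 0) :
    Irreducible (f.map (Int.castRingHom ℚ)) := by
  have hdeg : (f.map (Int.castRingHom ℚ)).natDegree = f.natDegree := hf.natDegree_map _
  rw [(hf.map _).irreducible_iff_roots_eq_zero_of_degree_le_three (hdeg ▸ h2) (hdeg ▸ h3),
    Multiset.eq_zero_iff_forall_notMem]
  intro q hq
  have hq' : aeval q f = 0 := by
    simpa [aeval_def, eval_map] using (mem_roots (hf.map _).ne_zero).mp hq
  obtain ⟨r, rfl⟩ := isInteger_of_is_root_of_monic hf hq'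
  apply hroot r
  simpa [aeval_def, eval₂_eq_eval_map] using hq'

theorem abs_norm_gen_eq_of_minpoly_eq_X_pow_sub_C {F L K : Type*} [Field F] [LinearOrder F]
    [IsStrictOrderedRing F] [Field L] [Field K] [Algebra F L] [Algebra L K] [Algebra F K]
    [IsScalarTower F L K] (pb : PowerBasis L K) {p : ℕ} (hp : p ≠ 0) {γ : L}
    (h : minpoly L pb.gen = X ^ p - C γ) :
    |Algebra.norm F pb.gen| = |Algebra.norm F γ| := by
  have hL : Algebra.norm L pb.gen = (-1) ^ (p + 1) * γ := by
    rw [Algebra.PowerBasis.norm_gen_eq_coeff_zero_minpoly, ← pb.natDegree_minpoly, h]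
    simp [coeff_X_pow, hp.symm, pow_succ]
  rw [← Algebra.norm_norm (S := L), hL, ← map_one (algebraMap F L), ← map_neg, map_mul,
    map_pow, Algebra.norm_algebraMap]
  simp [abs_mul]

section

variable {B : ℤ} (hB : Squarefree B) (hB1 : ¬IsUnit B)
include hB hB1

theorem pow_ne_of_abs_norm_eq {L : Type*} [CommRing L] [Algebra ℚ L] {p : ℕ} (hp : 2 ≤ p)
    {γ : L} (hγ : |Algebra.norm ℚ γ| = |B|) (b : L) : b ^ p ≠ γ := by
  rintro rfl
  have hassoc : Associated |B| B := associated_abs_left_iff.mpr (Associated.refl B)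
  apply pow_ne_algebraMap_of_squarefree (hassoc.squarefree_iff.mpr hB)
    (mt hassoc.isUnit_iff.mp hB1) hp |Algebra.norm ℚ b|
  rw [← abs_pow, ← map_pow, hγ]
  simp

theorem X_pow_prime_pow_sub_C_irreducible_of_abs_norm_eq {p : ℕ} (hp : p.Prime) (n : ℕ)
    {L : Type} [Field L] [Algebra ℚ L] {γ : L} (hγ : |Algebra.norm ℚ γ| = |B|) :
    Irreducible (X ^ p ^ n - C γ) := by
  induction n generalizing L with
  | zero => simpa using irreducible_X_sub_C γ
  | succ n ih =>
    rw [pow_succ]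
    refine X_pow_mul_sub_C_irreducible
      (X_pow_sub_C_irreducible_of_prime hp (pow_ne_of_abs_norm_eq hB hB1 hp.two_le hγ)) ?_
    intro E _ _ x hx
    have hxi : IsIntegral L x := minpoly.ne_zero_iff.mp (hx ▸ X_pow_sub_C_ne_zero hp.pos γ)
    have : CharZero L := charZero_of_injective_algebraMap (algebraMap ℚ L).injective
    have : IsScalarTower ℚ L L⟮x⟯ := IsScalarTower.of_algebraMap_eq' (Subsingleton.elim _ _)
    apply ih
    rw [← hγ, ← adjoin.powerBasis_gen hxi]
    exact abs_norm_gen_eq_of_minpoly_eq_X_pow_sub_C _ hp.ne_zero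
      (by rwa [adjoin.powerBasis_gen, minpoly_gen])

end

theorem stmt_7 (A B : ℤ) (hB : Squarefree B) (hB2 : 2 ≤ |B|)
    (hAB : (A % 4, B % 4) ∈
      ({(0,1),(0,2),(1,1),(1,3),(2,2),(2,3),(3,1),(3,3)} : Set (ℤ × ℤ)))
    (p : ℕ) (hp : p.Prime) (n : ℕ) :
    Irreducible (((X ^ 2 + C A * X + C B : Polynomial ℤ).comp (X ^ p ^ n)).map
      (Int.castRingHom ℚ)) := by
  set f : ℤ[X] := X ^ 2 + C A * X + C B with hf_def
  have hf : f.Monic := by rw [hf_def]; monicity!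
  have hdeg : f.natDegree = 2 := by rw [hf_def]; compute_degree!
  have hfirr : Irreducible (f.map (Int.castRingHom ℚ)) :=
    hf.irreducible_map_rat_of_forall_eval_ne_zero_s7 hdeg.ge (by omega) fun r ↦ by
      simpa [f] using Int.quadratic_ne_zero_of_mod_four hAB r
  have hB1 : ¬IsUnit B := by rw [Int.isUnit_iff_abs_eq]; omega
  rw [Polynomial.map_comp, Polynomial.map_pow, map_X]
  refine irreducible_comp (hf.map _) (monic_X_pow _) hfirr fun E _ _ x hx ↦ ?_
  rw [Polynomial.map_pow, map_X]
  have hxi : IsIntegral ℚ x := minpoly.ne_zero_iff.mp (hx ▸ (hf.map _).ne_zero)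
  -- `adjoin.powerBasis` is stated for this `ℚ`-algebra structure on `ℚ⟮x⟯`.
  let : Algebra ℚ ℚ⟮x⟯ := ℚ⟮x⟯.algebra'
  have hnorm : Algebra.norm ℚ (AdjoinSimple.gen ℚ x) = B := by
    rw [← adjoin.powerBasis_gen hxi, Algebra.PowerBasis.norm_gen_eq_coeff_zero_minpoly,
      ← PowerBasis.natDegree_minpoly, adjoin.powerBasis_gen, minpoly_gen, hx,
      hf.natDegree_map, hdeg]
    simp [f]
  exact X_pow_prime_pow_sub_C_irreducible_of_abs_norm_eq hB hB1 hp n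
    (by rw [hnorm, Int.cast_abs])
end

section
/- Let m ≥ 3 and let p ≥ 3 be prime. Let F(x) = x^m + A x^{m-1} + B with A = 4p^2 u + 1 and B = 2pt + p for integers u, t such that B is squarefree with |B| ≥ 2. If F(x) is irreducible over ℚ, then F(x^{p^n}) is irreducible over ℚ for all integers n ≥ 0. -/
/-!
By Capelli's theorem, `f(x ^ p)` is irreducible over `ℚ` as soon as `x ^ p - α` is irreducible
over `ℚ(α)` for a root `α` of `f`; for `p` prime this can only fail if `α = β ^ p` in `ℚ(α)`.
Then `β` is an algebraic integer and taking norms shows that `± f(0)` is the `p`-th power of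
the rational integer `N(β)`, which is impossible when `f(0) = B` is squarefree with `|B| ≥ 2`.
Since `f(x ^ (p ^ n))` is again monic with constant term `B`, induction on `n` concludes.
-/

open Polynomial IntermediateField

theorem Squarefree.not_associated_pow {M : Type*} [CommMonoid M] {b z : M} {n : ℕ}
    (hb : Squarefree b) (hb1 : ¬IsUnit b) (hn : 2 ≤ n) : ¬Associated (z ^ n) b := by
  intro h
  have hz : ¬IsUnit z := fun hz ↦ hb1 (h.isUnit (hz.pow n))
  rcases (h.squarefree_iff.mpr hb).eq_zero_or_one_of_pow_of_not_isUnit hz with rfl | rfl <;> omega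

namespace Polynomial

theorem coeff_zero_comp_X_pow {R : Type*} [CommSemiring R] (f : R[X]) {n : ℕ} (hn : n ≠ 0) :
    (f.comp (X ^ n)).coeff 0 = f.coeff 0 := by
  simp [coeff_zero_eq_eval_zero, eval_comp, zero_pow hn]

theorem exists_pow_associated_coeff_zero {E : Type*} [Field E] [Algebra ℚ E] {f : ℤ[X]}
    (hf : f.Monic) {x : E} (hx : minpoly ℚ x = f.map (Int.castRingHom ℚ)) {p : ℕ} (hp : 0 < p)
    {b : ℚ⟮x⟯} (hb : b ^ p = AdjoinSimple.gen ℚ x) : ∃ z : ℤ, Associated (z ^ p) (f.coeff 0) := by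
  have hxi : IsIntegral ℚ x := ⟨_, hf.map _, by rw [← hx]; exact minpoly.aeval ℚ x⟩
  let : Algebra ℚ ℚ⟮x⟯ := ℚ⟮x⟯.algebra'
  have hnorm : Algebra.norm ℚ (AdjoinSimple.gen ℚ x) =
      (-1) ^ f.natDegree * (f.coeff 0 : ℚ) := by
    have h := Algebra.PowerBasis.norm_gen_eq_coeff_zero_minpoly (adjoin.powerBasis hxi)
    rwa [adjoin.powerBasis_gen, adjoin.powerBasis_dim, minpoly_gen, hx, coeff_map,
      eq_intCast, hf.natDegree_map] at h
  have hgen : IsIntegral ℤ (AdjoinSimple.gen ℚ x) := by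
    refine ⟨f, hf, ?_⟩
    rw [← aeval_def, ← aeval_map_algebraMap ℚ, algebraMap_int_eq, ← hx, ← minpoly_gen]
    exact minpoly.aeval ℚ _
  obtain ⟨z, hz⟩ := IsIntegrallyClosed.isIntegral_iff.mp
    (Algebra.isIntegral_norm ℚ (IsIntegral.of_pow hp (hb ▸ hgen)))
  have hzp : z ^ p = (-1) ^ f.natDegree * f.coeff 0 := by
    rw [← Int.cast_inj (α := ℚ)]
    push_cast
    rw [← hnorm, ← hb, map_pow, ← hz, algebraMap_int_eq, eq_intCast]
  exact ⟨z, hzp ▸ associated_unit_mul_left _ _ (isUnit_neg_one.pow _)⟩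

theorem irreducible_map_comp_X_pow {f : ℤ[X]} (hf : f.Monic)
    (hirr : Irreducible (f.map (Int.castRingHom ℚ))) {p : ℕ} (hp : p.Prime)
    (hc : ∀ z : ℤ, ¬Associated (z ^ p) (f.coeff 0)) :
    Irreducible ((f.comp (X ^ p)).map (Int.castRingHom ℚ)) := by
  rw [Polynomial.map_comp, Polynomial.map_pow, map_X]
  refine irreducible_comp (hf.map _) (monic_X_pow p) hirr fun E _ _ x hx ↦ ?_
  rw [Polynomial.map_pow, map_X]
  exact X_pow_sub_C_irreducible_of_prime hp fun b hb ↦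
    (exists_pow_associated_coeff_zero hf hx hp.pos hb).elim hc

theorem irreducible_map_comp_X_pow_pow {f : ℤ[X]} (hf : f.Monic)
    (hirr : Irreducible (f.map (Int.castRingHom ℚ))) {p : ℕ} (hp : p.Prime)
    (hc : ∀ z : ℤ, ¬Associated (z ^ p) (f.coeff 0)) (n : ℕ) :
    Irreducible ((f.comp (X ^ p ^ n)).map (Int.castRingHom ℚ)) := by
  induction n with
  | zero => simpa using hirr
  | succ n ih =>
    have hpn : p ^ n ≠ 0 := pow_ne_zero n hp.ne_zero
    rw [pow_succ', pow_mul, ← X_pow_comp, ← comp_assoc]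
    refine irreducible_map_comp_X_pow (hf.comp (monic_X_pow _) (by simpa using hpn)) ih hp ?_
    rwa [coeff_zero_comp_X_pow f hpn]

end Polynomial

theorem stmt_14_general (m : ℕ) (hm : 3 ≤ m) (p : ℕ) (hp : p.Prime)
    (A B : ℤ)
    (hBsf : Squarefree B) (hB2 : 2 ≤ |B|)
    (hirr : Irreducible ((X ^ m + C A * X ^ (m - 1) + C B : Polynomial ℤ).map
      (Int.castRingHom ℚ))) (n : ℕ) :
    Irreducible (((X ^ m + C A * X ^ (m - 1) + C B : Polynomial ℤ).comp (X ^ p ^ n)).map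
      (Int.castRingHom ℚ)) := by
  have hmon : (X ^ m + C A * X ^ (m - 1) + C B : ℤ[X]).Monic := by
    monicity!
    simp [show m ≠ 0 by omega, show m ≠ m - 1 by omega]
  have hcoeff : (X ^ m + C A * X ^ (m - 1) + C B : ℤ[X]).coeff 0 = B := by
    simp [coeff_X_pow, show 0 ≠ m by omega, show 0 ≠ m - 1 by omega]
  have hB1 : ¬IsUnit B := by rw [Int.isUnit_iff_abs_eq]; omega
  refine irreducible_map_comp_X_pow_pow hmon hirr hp (fun z ↦ ?_) n
  rw [hcoeff]
  exact hBsf.not_associated_pow hB1 hp.two_le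

theorem stmt_14 (m : ℕ) (hm : 3 ≤ m) (p : ℕ) (hp : p.Prime) (hp3 : 3 ≤ p)
    (u t : ℤ) (A B : ℤ)
    (hA : A = 4 * (p : ℤ) ^ 2 * u + 1) (hB : B = 2 * p * t + p)
    (hBsf : Squarefree B) (hB2 : 2 ≤ |B|)
    (hirr : Irreducible ((X ^ m + C A * X ^ (m - 1) + C B : Polynomial ℤ).map
      (Int.castRingHom ℚ))) (n : ℕ) :
    Irreducible (((X ^ m + C A * X ^ (m - 1) + C B : Polynomial ℤ).comp (X ^ p ^ n)).map
      (Int.castRingHom ℚ)) :=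
  stmt_14_general m hm p hp A B hBsf hB2 hirr n
end

section
/- Let ℓ be a prime and let G(t) = ∏_{i=1}^{k} (a_i t + b_i) ∈ ℤ[t] be a product of k pairwise distinct linear factors with gcd(a_i, b_i) = 1 for each i. If k < 2(ℓ - 1), then there exists z ∈ (ℤ/ℓ^2 ℤ)^* with G(z) ≢ 0 (mod ℓ^2). -/
/-!
Over `𝔽_ℓ` each factor `a t + b` (not both coefficients `0`, by coprimality) vanishes at most
once, so the `k < 2(ℓ - 1)` factors have fewer than two roots on average over the `ℓ - 1`
nonzero residues: some `x ≠ 0` kills at most one factor. Every other factor is a unit mod `ℓ²`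
at any lift of `x`. The one factor vanishing mod `ℓ` has `ℓ ∤ a`, so moving the lift by `ℓ`
changes it by `a ℓ ≢ 0 (mod ℓ²)`, and one of the two lifts keeps it nonzero mod `ℓ²`.
-/

open Finset

section LinearRoots

variable {F ι : Type*} [Field F] [DecidableEq F] [Fintype ι]

lemma card_filter_mul_add_eq_zero_le_one {a b : F} (hab : a ≠ 0 ∨ b ≠ 0) (s : Finset F) :
    #{x ∈ s | a * x + b = 0} ≤ 1 := by
  refine card_le_one.mpr fun x hx y hy => ?_
  simp only [mem_filter] at hx hy
  have ha : a ≠ 0 := by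
    rintro rfl
    simp_all
  exact mul_left_cancel₀ ha (by linear_combination hx.2 - hy.2)

lemma exists_mem_card_filter_mul_add_eq_zero_le_one (a b : ι → F)
    (hab : ∀ i, a i ≠ 0 ∨ b i ≠ 0) (s : Finset F) (hs : Fintype.card ι < 2 * #s) :
    ∃ x ∈ s, #{i | a i * x + b i = 0} ≤ 1 := by
  have hsum : ∑ x ∈ s, #{i | a i * x + b i = 0} < ∑ _x ∈ s, 2 := calc
    _ = ∑ i, #{x ∈ s | a i * x + b i = 0} := by simp only [card_filter]; exact sum_comm
    _ ≤ ∑ _i : ι, 1 := sum_le_sum fun i _ => card_filter_mul_add_eq_zero_le_one (hab i) s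
    _ < _ := by simpa [mul_comm] using hs
  obtain ⟨x, hx, hlt⟩ := exists_lt_of_sum_lt hsum
  exact ⟨x, hx, Nat.le_of_lt_succ hlt⟩

end LinearRoots

lemma ZMod.isUnit_intCast_iff_not_dvd_pow {p d : ℕ} {a : ℤ} (hp : p.Prime) (hd : 0 < d) :
    IsUnit (a : ZMod (p ^ d)) ↔ ¬ (p : ℤ) ∣ a := by
  obtain ⟨n, rfl | rfl⟩ := a.eq_nat_or_neg <;>
    simp [isUnit_natCast_iff_not_dvd_pow hp hd, Int.natCast_dvd_natCast]

namespace Int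

variable {p : ℕ}

lemma not_sq_dvd_or_not_sq_dvd_add (hp : p.Prime) {a : ℤ} (ha : ¬ (p : ℤ) ∣ a) (b n : ℤ) :
    ¬ (p : ℤ) ^ 2 ∣ a * n + b ∨ ¬ (p : ℤ) ^ 2 ∣ a * (n + p) + b := by
  by_contra! h
  have hdiff : (p : ℤ) * p ∣ a * p := by
    have := dvd_sub h.2 h.1
    ring_nf at this ⊢
    exact this
  exact ha ((mul_dvd_mul_iff_right (by exact_mod_cast hp.ne_zero)).mp hdiff)

lemma exists_modEq_forall_not_sq_dvd {ι : Type*} (hp : p.Prime) (a b : ι → ℤ) (S : Finset ι)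
    (hS : #S ≤ 1) (ha : ∀ i ∈ S, ¬ (p : ℤ) ∣ a i) (n : ℤ) :
    ∃ m, m ≡ n [ZMOD p] ∧ ∀ i ∈ S, ¬ (p : ℤ) ^ 2 ∣ a i * m + b i := by
  rcases Nat.le_one_iff_eq_zero_or_eq_one.mp hS with hS | hS
  · exact ⟨n, rfl, by simp [card_eq_zero.mp hS]⟩
  obtain ⟨i₀, rfl⟩ := card_eq_one.mp hS
  rcases not_sq_dvd_or_not_sq_dvd_add hp (ha i₀ (mem_singleton_self _)) (b i₀) n with h | h
  · exact ⟨n, rfl, by simpa using h⟩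
  · exact ⟨n + p, by simp [Int.ModEq], by simpa using h⟩

lemma not_sq_dvd_prod {ι : Type*} [Fintype ι] (hp : p.Prime) (c : ι → ℤ) (S : Finset ι)
    (hS : #S ≤ 1) (hout : ∀ i ∉ S, ¬ (p : ℤ) ∣ c i) (hin : ∀ i ∈ S, ¬ (p : ℤ) ^ 2 ∣ c i) :
    ¬ (p : ℤ) ^ 2 ∣ ∏ i, c i := by
  have hp' : Prime (p : ℤ) := Nat.prime_iff_prime_int.mp hp
  rcases Nat.le_one_iff_eq_zero_or_eq_one.mp hS with hS | hS
  · have : ¬ (p : ℤ) ∣ ∏ i, c i := by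
      simpa [hp'.dvd_finsetProd_iff, card_eq_zero.mp hS] using hout
    exact fun h => this ((dvd_pow_self _ two_ne_zero).trans h)
  obtain ⟨i₀, rfl⟩ := card_eq_one.mp hS
  classical
  have hrest : IsCoprime ((p : ℤ) ^ 2) (∏ i ∈ {i₀}ᶜ, c i) := by
    refine IsCoprime.pow_left ((Prime.coprime_iff_not_dvd hp').mpr ?_)
    simpa [hp'.dvd_finsetProd_iff] using hout
  rw [Fintype.prod_eq_mul_prod_compl i₀]
  exact fun h => hin i₀ (mem_singleton_self _) (hrest.dvd_of_dvd_mul_right h)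

end Int

theorem stmt_16_general (ℓ : ℕ) (hℓ : ℓ.Prime) (k : ℕ) (a b : Fin k → ℤ)
    (hcop : ∀ i, IsCoprime (a i) (b i))
    (hk : k < 2 * (ℓ - 1)) :
    ∃ z : (ZMod (ℓ ^ 2))ˣ,
      (∏ i, ((a i : ZMod (ℓ ^ 2)) * (z : ZMod (ℓ ^ 2)) + (b i : ZMod (ℓ ^ 2)))) ≠ 0 := by
  have : Fact ℓ.Prime := ⟨hℓ⟩
  have hab : ∀ i, (a i : ZMod ℓ) ≠ 0 ∨ (b i : ZMod ℓ) ≠ 0 := fun i => by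
    simp only [ne_eq, ZMod.intCast_zmod_eq_zero_iff_dvd, ← not_and_or]
    exact fun h => (Nat.prime_iff_prime_int.mp hℓ).not_isUnit ((hcop i).isUnit_of_dvd' h.1 h.2)
  obtain ⟨x, hx0, hS⟩ := exists_mem_card_filter_mul_add_eq_zero_le_one
    (fun i => (a i : ZMod ℓ)) (fun i => (b i : ZMod ℓ)) hab (univ.erase 0)
    (by rwa [card_erase_of_mem (mem_univ _), card_univ, ZMod.card, Fintype.card_fin])
  set S : Finset (Fin k) := {i | (a i : ZMod ℓ) * x + b i = 0}
  have ha : ∀ i ∈ S, ¬ (ℓ : ℤ) ∣ a i := by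
    intro i hi ha
    rw [← ZMod.intCast_zmod_eq_zero_iff_dvd] at ha
    simp only [S, mem_filter, ha, zero_mul, zero_add] at hi
    exact (hab i).elim (· ha) (· hi.2)
  obtain ⟨m, hmx, hsq⟩ := Int.exists_modEq_forall_not_sq_dvd hℓ a b S hS ha (x.val : ℤ)
  replace hmx : (m : ZMod ℓ) = x := by simp [(ZMod.intCast_eq_intCast_iff _ _ _).mpr hmx]
  have hunit : IsUnit (m : ZMod (ℓ ^ 2)) := by
    rw [ZMod.isUnit_intCast_iff_not_dvd_pow hℓ two_pos, ← ZMod.intCast_zmod_eq_zero_iff_dvd, hmx]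
    exact ne_of_mem_erase hx0
  have hdvd_iff : ∀ i, (ℓ : ℤ) ∣ a i * m + b i ↔ i ∈ S := fun i => by
    simp [S, ← ZMod.intCast_zmod_eq_zero_iff_dvd, hmx]
  refine ⟨hunit.unit, ?_⟩
  have hprod := Int.not_sq_dvd_prod hℓ (fun i => a i * m + b i) S hS
    (fun i hi => (hdvd_iff i).not.mpr hi) hsq
  rw [← Nat.cast_pow, ← ZMod.intCast_zmod_eq_zero_iff_dvd] at hprod
  simpa using hprod

theorem stmt_16 (ℓ : ℕ) (hℓ : ℓ.Prime) (k : ℕ) (a b : Fin k → ℤ)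
    (hcop : ∀ i, IsCoprime (a i) (b i))
    (hdist : ∀ i j, i ≠ j → (a i, b i) ≠ (a j, b j))
    (hk : k < 2 * (ℓ - 1)) :
    ∃ z : (ZMod (ℓ ^ 2))ˣ,
      (∏ i, ((a i : ZMod (ℓ ^ 2)) * (z : ZMod (ℓ ^ 2)) + (b i : ZMod (ℓ ^ 2)))) ≠ 0 :=
  stmt_16_general ℓ hℓ k a b hcop hk
end

section
/- Let c ≥ 2 be an integer and α an algebraic number. Then x^c - α is reducible over ℚ(α) if and only if either there is a prime p dividing c with α = β^p for some β ∈ ℚ(α), or 4 divides c and α = -4β^4 for some β ∈ ℚ(α). -/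
/-!
Write `n = 2 ^ k * m` with `m` odd and let `x ^ (2 ^ k) = a`. Through the tower `K ⊆ K(x)`,
irreducibility of `X ^ n - a` reduces to that of `X ^ (2 ^ k) - a` over `K` and of `X ^ m - x` over
`K(x)`. For the odd part, a `q`-th root of `x` would give a `q`-th root of the norm `N(x) = -a`,
hence of `a`. The `2`-power part goes by induction through `K(√a)`: comparing coordinates in
`(c + d √a) ^ 2 = ± √a` shows that `√a` is not a square there, and that `-√a` is one only when
`a = -4 b ^ 4`. Conversely, a `p`-th power `a = b ^ p` gives the factor `X ^ (n / p) - b`, and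
`X ^ (4m) + 4 b ^ 4 = (X ^ (2m) - 2b X ^ m + 2b ^ 2) (X ^ (2m) + 2b X ^ m + 2b ^ 2)`.
-/

open Polynomial IntermediateField

universe u

variable {K : Type u} [Field K]

lemma not_irreducible_X_pow_sub_C_neg_four_mul_pow_four {m : ℕ} (hm : m ≠ 0) (b : K) :
    ¬ Irreducible (X ^ (4 * m) - C (-4 * b ^ 4)) := by
  have hdeg (u : K) : (X ^ (2 * m) + C u * X ^ m + C (2 * b ^ 2)).natDegree = 2 * m := by
    compute_degree!
    all_goals first | omega | simp [hm]
  have hfac : (X ^ (4 * m) - C (-4 * b ^ 4) : K[X]) =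
      (X ^ (2 * m) + C (-(2 * b)) * X ^ m + C (2 * b ^ 2)) *
        (X ^ (2 * m) + C (2 * b) * X ^ m + C (2 * b ^ 2)) := by
    simp only [map_neg, map_mul, map_pow, map_ofNat]
    ring
  intro hirr
  rcases hirr.isUnit_or_isUnit hfac with h | h <;>
    exact not_isUnit_of_natDegree_pos _ (by rw [hdeg]; omega) h

lemma exists_eq_neg_four_mul_pow_four_of_sq_eq {F : Type*} [Field F] [Algebra K F] {g : F}
    {a s c d : K} (hg : g ^ 2 = algebraMap K F a) (hgK : g ∉ Set.range (algebraMap K F))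
    (hs : s ^ 2 = 1) (h : (algebraMap K F d * g + algebraMap K F c) ^ 2 = algebraMap K F s * g) :
    ∃ b, a = -4 * b ^ 4 := by
  have hsplit : algebraMap K F (c ^ 2 + d ^ 2 * a) + algebraMap K F (2 * c * d - s) * g = 0 := by
    simp only [map_add, map_mul, map_pow, map_sub, map_ofNat]
    linear_combination h - algebraMap K F d ^ 2 * hg
  have hcd : 2 * c * d = s := by
    by_contra hne
    refine hgK ⟨-(c ^ 2 + d ^ 2 * a) / (2 * c * d - s), ?_⟩
    rw [map_div₀, map_neg, div_eq_iff ((_root_.map_ne_zero _).mpr (sub_ne_zero.mpr hne))]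
    linear_combination -hsplit
  have hsum : c ^ 2 + d ^ 2 * a = 0 := by
    rwa [hcd, sub_self, map_zero, zero_mul, add_zero, map_eq_zero] at hsplit
  have hd : d ≠ 0 := by rintro rfl; simp [← hcd] at hs
  have h2 : (2 : K) ≠ 0 := by rintro h2; simp [← hcd, h2] at hs
  -- `a = -c ^ 2 / d ^ 2` and `4 c ^ 2 d ^ 2 = s ^ 2 = 1`, so `a = -1 / (4 d ^ 4)`
  refine ⟨1 / (2 * d), ?_⟩
  field_simp
  linear_combination 16 * d ^ 2 * hsum - 4 * ((2 * c * d + s) * hcd + hs)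

lemma sq_ne_algebraMap_mul_gen {E : Type*} [Field E] [Algebra K E] {x : E} {a : K}
    (hx : minpoly K x = X ^ 2 - C a) (ha : ∀ b, a ≠ -4 * b ^ 4) {s : K} (hs : s ^ 2 = 1)
    (γ : K⟮x⟯) : γ ^ 2 ≠ algebraMap K K⟮x⟯ s * AdjoinSimple.gen K x := by
  have hint : IsIntegral K x := minpoly.ne_zero_iff.mp (hx ▸ X_pow_sub_C_ne_zero two_pos a)
  have hdeg : (minpoly K x).natDegree = 2 := by rw [hx, natDegree_X_pow_sub_C]
  have hsq : AdjoinSimple.gen K x ^ 2 = algebraMap K K⟮x⟯ a := by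
    simpa [minpoly_gen, hx, sub_eq_zero] using minpoly.aeval K (AdjoinSimple.gen K x)
  have hgK : AdjoinSimple.gen K x ∉ Set.range (algebraMap K K⟮x⟯) := by
    rintro ⟨r, hr⟩
    have := congrArg natDegree ((minpoly_gen K x).symm.trans (hr ▸ minpoly.eq_X_sub_C K⟮x⟯ r))
    rw [hdeg, natDegree_X_sub_C] at this
    omega
  obtain ⟨f, hf, rfl⟩ := (adjoin.powerBasis hint).exists_eq_aeval γ
  rw [adjoin.powerBasis_dim, hdeg] at hf
  rw [f.eq_X_add_C_of_natDegree_le_one (by omega)]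
  intro h
  obtain ⟨b, hb⟩ := exists_eq_neg_four_mul_pow_four_of_sq_eq (c := f.coeff 0) (d := f.coeff 1)
    hsq hgK hs (by simpa only [map_add, map_mul, aeval_C, aeval_X, adjoin.powerBasis_gen] using h)
  exact ha b hb

theorem X_pow_two_pow_sub_C_irreducible {k : ℕ} (hk : 1 ≤ k) {a : K} (ha : ∀ b, b ^ 2 ≠ a)
    (ha4 : 2 ≤ k → ∀ b, a ≠ -4 * b ^ 4) : Irreducible (X ^ 2 ^ k - C a) := by
  induction k, hk using Nat.le_induction generalizing K a with
  | base => simpa using X_pow_sub_C_irreducible_of_prime Nat.prime_two ha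
  | succ k hk IH =>
    rw [pow_succ]
    refine X_pow_mul_sub_C_irreducible (X_pow_sub_C_irreducible_of_prime Nat.prime_two ha) ?_
    intro E _ _ x hx
    have ha4' := ha4 (by omega)
    refine IH (fun γ hγ => sq_ne_algebraMap_mul_gen hx ha4' (one_pow 2) γ (by simpa using hγ))
      (fun _ b hb => sq_ne_algebraMap_mul_gen hx ha4' (s := -1) (by norm_num) (2 * b ^ 2) ?_)
    rw [hb, map_neg, map_one]
    ring

lemma norm_gen_eq_neg_of_minpoly_eq_X_pow_sub_C {E : Type*} [Field E] [Algebra K E] {x : E}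
    {n : ℕ} (hn : Even n) (hn0 : n ≠ 0) {a : K} (hx : minpoly K x = X ^ n - C a) :
    Algebra.norm K (AdjoinSimple.gen K x) = -a := by
  have hint : IsIntegral K x :=
    minpoly.ne_zero_iff.mp (hx ▸ X_pow_sub_C_ne_zero (Nat.pos_of_ne_zero hn0) a)
  rw [← adjoin.powerBasis_gen hint, Algebra.PowerBasis.norm_gen_eq_coeff_zero_minpoly]
  simp [minpoly_gen, hx, Ne.symm hn0, hn.neg_one_pow]

lemma X_pow_sub_C_gen_irreducible_of_odd {E : Type*} [Field E] [Algebra K E] {x : E}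
    {n m : ℕ} (hn : Even n) (hn0 : n ≠ 0) (hm : Odd m) {a : K} (hx : minpoly K x = X ^ n - C a)
    (ha : ∀ p : ℕ, p.Prime → p ∣ m → ∀ b : K, b ^ p ≠ a) :
    Irreducible (X ^ m - C (AdjoinSimple.gen K x)) := by
  refine X_pow_sub_C_irreducible_of_odd hm fun p hp hpm b hb => ha p hp hpm (-Algebra.norm K b) ?_
  rw [(hm.of_dvd_nat hpm).neg_pow, ← map_pow, hb,
    norm_gen_eq_neg_of_minpoly_eq_X_pow_sub_C hn hn0 hx, neg_neg]

theorem X_pow_sub_C_irreducible_of_not_pow {n : ℕ} (hn : n ≠ 0) {a : K}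
    (ha : ∀ p : ℕ, p.Prime → p ∣ n → ∀ b : K, b ^ p ≠ a) (ha4 : 4 ∣ n → ∀ b, a ≠ -4 * b ^ 4) :
    Irreducible (X ^ n - C a) := by
  obtain ⟨k, m, hm, rfl⟩ := Nat.exists_eq_two_pow_mul_odd hn
  rcases Nat.eq_zero_or_pos k with rfl | hk
  · simpa using X_pow_sub_C_irreducible_of_odd hm (by simpa using ha)
  have h2k : 2 ∣ 2 ^ k * m := dvd_mul_of_dvd_left (dvd_pow_self 2 hk.ne') m
  rw [mul_comm]
  refine X_pow_mul_sub_C_irreducible (X_pow_two_pow_sub_C_irreducible hk (ha 2 Nat.prime_two h2k)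
    fun hk2 => ha4 (dvd_mul_of_dvd_left (dvd_trans (by norm_num) (pow_dvd_pow 2 hk2)) m)) ?_
  intro E _ _ x hx
  exact X_pow_sub_C_gen_irreducible_of_odd (Nat.even_pow.mpr ⟨even_two, hk.ne'⟩) (by positivity)
    hm hx fun p hp hpm => ha p hp (dvd_mul_of_dvd_right hpm _)

theorem X_pow_sub_C_irreducible_iff {n : ℕ} (hn : n ≠ 0) {a : K} :
    Irreducible (X ^ n - C a) ↔
      (∀ p : ℕ, p.Prime → p ∣ n → ∀ b : K, b ^ p ≠ a) ∧ (4 ∣ n → ∀ b, a ≠ -4 * b ^ 4) := by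
  refine ⟨fun h => ⟨fun p hp hpn => pow_ne_of_irreducible_X_pow_sub_C h hpn hp.ne_one, ?_⟩,
    fun h => X_pow_sub_C_irreducible_of_not_pow hn h.1 h.2⟩
  rintro ⟨m, rfl⟩ b rfl
  exact not_irreducible_X_pow_sub_C_neg_four_mul_pow_four (right_ne_zero_of_mul hn) b h

theorem stmt_17_general (c : ℕ) (hc : 2 ≤ c) (K : Type*) [Field K]
    (α : K) :
    ¬ Irreducible (X ^ c - C α : Polynomial K) ↔
      (∃ p : ℕ, p.Prime ∧ p ∣ c ∧ ∃ β : K, α = β ^ p) ∨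
        (4 ∣ c ∧ ∃ β : K, α = -4 * β ^ 4) := by
  rw [X_pow_sub_C_irreducible_iff (by omega)]
  simp only [not_and_or, not_forall, not_not, exists_prop, eq_comm]

theorem stmt_17 (c : ℕ) (hc : 2 ≤ c) (K : Type*) [Field K] [Algebra ℚ K]
    (α : K) (halg : IsAlgebraic ℚ α) (hgen : Algebra.adjoin ℚ {α} = ⊤) :
    ¬ Irreducible (X ^ c - C α : Polynomial K) ↔
      (∃ p : ℕ, p.Prime ∧ p ∣ c ∧ ∃ β : K, α = β ^ p) ∨
        (4 ∣ c ∧ ∃ β : K, α = -4 * β ^ 4) :=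
  stmt_17_general c hc K α
end

section
/- Let f(x), h(x) ∈ ℚ[x] with f irreducible over ℚ, and let α be a root of f. Then f(h(x)) is reducible over ℚ if and only if h(x) - α is reducible over ℚ(α). -/
/-!
Pick a root `γ` of `h - α`. Then `h(γ) = α`, so `F(α) ⊆ F(γ)` and `γ` is a root of `f ∘ h`, and the
tower law gives `[F(γ) : F] = deg f · [F(α)(γ) : F(α)]`. A polynomial with a root is irreducible
exactly when its degree is that of the root's minimal polynomial; hence `f ∘ h`, of degree
`deg f · deg h`, is irreducible over `F` iff `[F(α)(γ) : F(α)] = deg h`, i.e. iff `h - α` is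
irreducible over `F(α)`.
-/

open Polynomial IntermediateField

theorem Polynomial.irreducible_iff_natDegree_minpoly_eq {F L : Type*} [Field F] [Field L]
    [Algebra F L] {p : F[X]} {x : L} (hp : p ≠ 0) (hx : aeval x p = 0) :
    Irreducible p ↔ (minpoly F x).natDegree = p.natDegree := by
  have hx_int : IsIntegral F x := IsAlgebraic.isIntegral ⟨p, hp, hx⟩
  have hdvd : minpoly F x ∣ p := minpoly.dvd F x hx
  refine ⟨fun hirr ↦ ?_, fun hdeg ↦ ?_⟩
  · exact natDegree_eq_of_degree_eq <| degree_eq_degree_of_associated <|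
      (minpoly.irreducible hx_int).associated_of_dvd hirr hdvd
  · exact (associated_of_dvd_of_natDegree_le hdvd hp hdeg.ge).irreducible
      (minpoly.irreducible hx_int)

theorem IntermediateField.natDegree_minpoly_eq_mul_of_mem_adjoin {F L : Type*} [Field F]
    [Field L] [Algebra F L] {α γ : L} (hγ : IsIntegral F γ) (hα : α ∈ F⟮γ⟯) :
    (minpoly F γ).natDegree = (minpoly F α).natDegree * (minpoly F⟮α⟯ γ).natDegree := by
  have : FiniteDimensional F F⟮γ⟯ := adjoin.finiteDimensional hγ
  have hα_int : IsIntegral F α := isIntegral_iff.mp (IsIntegral.of_finite F (⟨α, hα⟩ : F⟮γ⟯))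
  have htower : F⟮α⟯⟮γ⟯.restrictScalars F = F⟮γ⟯ := by
    rw [restrictScalars_adjoin_eq_sup, sup_eq_right]
    exact adjoin_simple_le_iff.mpr hα
  rw [← adjoin.finrank hγ, ← adjoin.finrank hα_int, ← adjoin.finrank hγ.tower_top, ← htower]
  exact (Module.finrank_mul_finrank F F⟮α⟯ F⟮α⟯⟮γ⟯).symm

theorem Polynomial.irreducible_comp_iff_irreducible_map_sub_C {F L : Type*} [Field F] [Field L]
    [IsAlgClosed L] [Algebra F L] {f : F[X]} (hf : Irreducible f) {α : L}
    (hα : aeval α f = 0) (h : F[X]) :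
    Irreducible (f.comp h) ↔
      Irreducible (h.map (algebraMap F F⟮α⟯) - C (AdjoinSimple.gen F α)) := by
  rcases eq_or_ne h.natDegree 0 with hh | hh
  · rw [eq_C_of_natDegree_eq_zero hh, comp_C, map_C, ← C_sub]
    exact iff_of_false (not_irreducible_C _) (not_irreducible_C _)
  set g := h.map (algebraMap F F⟮α⟯) - C (AdjoinSimple.gen F α)
  have hg : g.natDegree = h.natDegree := by rw [natDegree_sub_C, natDegree_map]
  have hfh : (f.comp h).natDegree ≠ 0 := by
    rw [natDegree_comp]
    exact mul_ne_zero hf.natDegree_pos.ne' hh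
  obtain ⟨γ, hγ⟩ : ∃ γ : L, aeval γ g = 0 :=
    IsAlgClosed.exists_aeval_eq_zero L g fun e ↦ hh (hg ▸ natDegree_eq_of_degree_eq_some e)
  have hhγ : aeval γ h = α := by simpa [g, sub_eq_zero] using hγ
  have hfhγ : aeval γ (f.comp h) = 0 := by rw [aeval_comp, hhγ, hα]
  have hfh_ne : f.comp h ≠ 0 := ne_zero_of_natDegree_gt (Nat.pos_of_ne_zero hfh)
  have hg_ne : g ≠ 0 := ne_zero_of_natDegree_gt (n := 0) (by omega)
  have hα_mem : α ∈ F⟮γ⟯ :=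
    hhγ ▸ algebra_adjoin_le_adjoin F _ (aeval_mem_adjoin_singleton F γ)
  have hγ_int : IsIntegral F γ := IsAlgebraic.isIntegral ⟨_, hfh_ne, hfhγ⟩
  rw [irreducible_iff_natDegree_minpoly_eq hfh_ne hfhγ,
    irreducible_iff_natDegree_minpoly_eq hg_ne hγ,
    natDegree_minpoly_eq_mul_of_mem_adjoin hγ_int hα_mem, natDegree_comp,
    (irreducible_iff_natDegree_minpoly_eq hf.ne_zero hα).mp hf, hg]
  exact Nat.mul_right_inj hf.natDegree_pos.ne'

theorem stmt_18 (f h : Polynomial ℚ) (hf : Irreducible f)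
    (α : ℂ) (hα : Polynomial.aeval α f = 0) :
    ¬ Irreducible (f.comp h) ↔
      ¬ Irreducible ((h.map (algebraMap ℚ ℚ⟮α⟯)) - C (AdjoinSimple.gen ℚ α)) :=
  not_congr (irreducible_comp_iff_irreducible_map_sub_C hf hα h)
end
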